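/- arXiv:1309.3026 — 2 statements merged into one kernel-verified Lean document; each statement's English description precedes it below -/
import Mathlib

section
/- Let Γ ↷ (X, μ) be a strongly ergodic p.m.p. action of a countable group on a standard probability space, let H be a Polish group, and let w : Γ × X → H be a cocycle. Assume there exists a sequence of Borel maps φ_n : X → H such that for every g ∈ Γ, μ({x ∈ X : w(g, x) = φ_n(gx)·φ_n(x)⁻¹}) → 1 as n → ∞. Then w is cohomologous to the trivial homomorphism from Γ to H: there exists a Borel map ψ : X → H such that w(g, x) = ψ(gx)·ψ(x)⁻¹ for all g ∈ Γ and almost every x ∈ X. -/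
/-!
The differences `φₙ⁻¹ φₘ` are asymptotically invariant maps into `H`, and strong ergodicity
forces such maps into a countably separated space to be asymptotically constant. Along a fast
subsequence, `φ_{n_k}⁻¹ φ_{n_{k+1}} = c_k` off a set of measure `2⁻ᵏ`, so by Borel–Cantelli the
corrected maps `φ_{n_k} (c₀ ⋯ c_{k-1})⁻¹` stabilise almost everywhere. Their limit `ψ` works,
since `w(g, x) = φ_{n_k}(gx) φ_{n_k}(x)⁻¹` holds for infinitely many `k` at almost every `x`.
-/

open MeasureTheory Filter Topology Set
open scoped ENNReal symmDiff

namespace IoanaPaper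

/-- A p.m.p. action is strongly ergodic if every asymptotically invariant sequence of Borel
sets is trivial: `μ(g Aₙ Δ Aₙ) → 0` for all `g` implies `μ(Aₙ)(1 - μ(Aₙ)) → 0`. -/
def StronglyErgodic {Γ X : Type*} [MeasurableSpace X] (μ : Measure X) (a : Γ → X → X) : Prop :=
  ∀ A : ℕ → Set X, (∀ n, MeasurableSet (A n)) →
    (∀ g : Γ, Tendsto (fun n => μ (symmDiff (a g '' A n) (A n))) atTop (𝓝 0)) →
    Tendsto (fun n => μ (A n) * μ (A n)ᶜ) atTop (𝓝 0)

section Concentration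

variable {H : Type*} [MeasurableSpace H] {ν : Measure H} [IsProbabilityMeasure ν] {ε : ℝ≥0∞}

lemma measure_union_le_of_dichotomy (hε : 3 * ε < 1)
    (hdi : ∀ B, MeasurableSet B → ν B ≤ ε ∨ ν Bᶜ ≤ ε) {B C : Set H}
    (hB : MeasurableSet B) (hC : MeasurableSet C) (hνB : ν B ≤ ε) (hνC : ν C ≤ ε) :
    ν (B ∪ C) ≤ ε := by
  refine (hdi _ (hB.union hC)).resolve_right fun hcompl => hε.not_ge ?_
  calc 1 = ν univ := measure_univ.symm
    _ ≤ ν (B ∪ C) + ν (B ∪ C)ᶜ := measure_univ_le_add_compl _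
    _ ≤ (ν B + ν C) + ε := add_le_add (measure_union_le _ _) hcompl
    _ ≤ (ε + ε) + ε := by gcongr
    _ = 3 * ε := by ring

lemma measure_iUnion_le_of_dichotomy (hε : 3 * ε < 1)
    (hdi : ∀ B, MeasurableSet B → ν B ≤ ε ∨ ν Bᶜ ≤ ε) {s : ℕ → Set H}
    (hs : ∀ n, MeasurableSet (s n)) (hνs : ∀ n, ν (s n) ≤ ε) :
    ν (⋃ n, s n) ≤ ε := by
  rw [measure_iUnion_eq_iSup_accumulate]
  refine iSup_le fun n => ?_
  induction n with
  | zero => simpa [accumulate_def] using hνs 0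
  | succ n ih =>
    rw [accumulate_succ]
    exact measure_union_le_of_dichotomy hε hdi
      (MeasurableSet.biUnion (to_countable _) fun i _ => hs i) (hs _) ih (hνs _)

/-- The union of the small members of a countable separating family and of their complements
is small, and the points outside it cannot be separated. -/
theorem exists_measure_compl_singleton_le_of_dichotomy [MeasurableSpace.CountablySeparated H]
    (hε : 3 * ε < 1) (hdi : ∀ B, MeasurableSet B → ν B ≤ ε ∨ ν Bᶜ ≤ ε) :
    ∃ c : H, ν {c}ᶜ ≤ ε := by
  classical
  obtain ⟨S, hS_meas, hS_sep⟩ := exists_seq_separating H MeasurableSet.empty univ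
  set small : ℕ → Set H := fun n => if ν (S n) ≤ ε then S n else (S n)ᶜ
  have hsmall_meas : ∀ n, MeasurableSet (small n) := fun n => by
    by_cases h : ν (S n) ≤ ε <;> simp [small, h, hS_meas n]
  have hsmall : ∀ n, ν (small n) ≤ ε := fun n => by
    by_cases h : ν (S n) ≤ ε
    · simp [small, h]
    · simpa [small, h] using (hdi _ (hS_meas n)).resolve_left h
  have hU : ν (⋃ n, small n) ≤ ε := measure_iUnion_le_of_dichotomy hε hdi hsmall_meas hsmall
  obtain ⟨c, hc⟩ : (⋃ n, small n)ᶜ.Nonempty := by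
    refine nonempty_compl.2 fun hU_univ => hε.not_ge ?_
    rw [hU_univ, measure_univ] at hU
    exact hU.trans (le_mul_of_one_le_left zero_le (by norm_num))
  refine ⟨c, le_trans (measure_mono fun z hz => ?_) hU⟩
  by_contra hzU
  simp only [mem_compl_iff, mem_iUnion, not_exists] at hc hzU
  refine hz (hS_sep z trivial c trivial fun n => ?_)
  have hcn := hc n
  have hzn := hzU n
  simp only [small] at hcn hzn
  split_ifs at hcn hzn <;> simp_all only [mem_compl_iff, not_not]

end Concentration

section StrongErgodicity

variable {Γ X H : Type*} [Group Γ] [MeasurableSpace X] {μ : Measure X} {a : Γ → X → X}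

lemma measure_image_preimage_symmDiff_le (ha_one : ∀ x, a 1 x = x)
    (ha_mul : ∀ g h x, a (g * h) x = a g (a h x)) {g : Γ}
    (hg_pres : MeasurePreserving (a g⁻¹) μ μ) (f : X → H) (B : Set H) :
    μ ((a g '' (f ⁻¹' B)) ∆ (f ⁻¹' B)) ≤ μ {x | f (a g x) ≠ f x} := by
  have hleft : Function.LeftInverse (a g⁻¹) (a g) := fun x => by
    rw [← ha_mul, inv_mul_cancel, ha_one]
  have hright : Function.RightInverse (a g⁻¹) (a g) := fun x => by
    rw [← ha_mul, mul_inv_cancel, ha_one]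
  rw [image_eq_preimage_of_inverse hleft hright]
  refine (measure_mono fun y hy => ?_).trans (hg_pres.measure_preimage_le _)
  change f (a g (a g⁻¹ y)) ≠ f (a g⁻¹ y)
  rw [hright y]
  intro heq
  simp [mem_symmDiff, heq] at hy

variable [IsProbabilityMeasure μ] [MeasurableSpace H] [MeasurableSpace.CountablySeparated H]

/-- Where `f n` is not `ε`-concentrated, some Borel set violates the dichotomy of
`exists_measure_compl_singleton_le_of_dichotomy`; the preimages of these sets are
asymptotically invariant, so strong ergodicity rules this out eventually. -/
theorem StronglyErgodic.eventually_exists_measure_ne_le (hse : StronglyErgodic μ a)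
    (ha_one : ∀ x, a 1 x = x) (ha_mul : ∀ g h x, a (g * h) x = a g (a h x))
    (ha_pres : ∀ g, MeasurePreserving (a g) μ μ) {f : ℕ → X → H} (hf : ∀ n, Measurable (f n))
    (hinv : ∀ g, Tendsto (fun n => μ {x | f n (a g x) ≠ f n x}) atTop (𝓝 0))
    {ε : ℝ≥0∞} (hε : 0 < ε) (hε3 : 3 * ε < 1) :
    ∀ᶠ n in atTop, ∃ c, μ {x | f n x ≠ c} ≤ ε := by
  have hsplit : ∀ n, ∃ B, MeasurableSet B ∧
      (μ (f n ⁻¹' B) ≤ ε ∨ μ (f n ⁻¹' B)ᶜ ≤ ε → ∃ c, μ {x | f n x ≠ c} ≤ ε) := by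
    intro n
    by_cases hconc : ∃ c, μ {x | f n x ≠ c} ≤ ε
    · exact ⟨∅, .empty, fun _ => hconc⟩
    obtain ⟨B, hB, hB_split⟩ : ∃ B, MeasurableSet B ∧
        ¬(μ (f n ⁻¹' B) ≤ ε ∨ μ (f n ⁻¹' B)ᶜ ≤ ε) := by
      by_contra! hdi
      have := Measure.isProbabilityMeasure_map (μ := μ) (hf n).aemeasurable
      obtain ⟨c, hc⟩ := exists_measure_compl_singleton_le_of_dichotomy (ν := μ.map (f n)) hε3
        fun B hB => by
          rw [Measure.map_apply (hf n) hB, Measure.map_apply (hf n) hB.compl]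
          exact hdi B hB
      exact hconc ⟨c, (Measure.le_map_apply (hf n).aemeasurable _).trans hc⟩
    exact ⟨B, hB, fun h => absurd h hB_split⟩
  choose B hB_meas hB using hsplit
  have hA_inv : ∀ g, Tendsto (fun n => μ ((a g '' (f n ⁻¹' B n)) ∆ (f n ⁻¹' B n))) atTop (𝓝 0) :=
    fun g => tendsto_of_tendsto_of_tendsto_of_le_of_le tendsto_const_nhds (hinv g)
      (fun _ => zero_le) fun n =>
        measure_image_preimage_symmDiff_le ha_one ha_mul (ha_pres g⁻¹) (f n) (B n)
  have hprod := hse (fun n => f n ⁻¹' B n) (fun n => hf n (hB_meas n)) hA_inv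
  filter_upwards [hprod.eventually_lt_const (ENNReal.mul_pos hε.ne' hε.ne')] with n hn
  refine hB n ?_
  by_contra! h
  exact hn.not_ge (mul_le_mul' h.1.le h.2.le)

theorem StronglyErgodic.tendsto_iInf_measure_ne (hse : StronglyErgodic μ a)
    (ha_one : ∀ x, a 1 x = x) (ha_mul : ∀ g h x, a (g * h) x = a g (a h x))
    (ha_pres : ∀ g, MeasurePreserving (a g) μ μ) {ι : Type*} {l : Filter ι}
    [l.IsCountablyGenerated] {f : ι → X → H} (hf : ∀ i, Measurable (f i))
    (hinv : ∀ g, Tendsto (fun i => μ {x | f i (a g x) ≠ f i x}) l (𝓝 0)) :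
    Tendsto (fun i => ⨅ c, μ {x | f i x ≠ c}) l (𝓝 0) := by
  refine tendsto_of_seq_tendsto fun u hu => ENNReal.tendsto_nhds_zero.2 fun ε hε => ?_
  have hε3 : 3 * min ε 4⁻¹ < 1 :=
    calc 3 * min ε 4⁻¹ ≤ 3 * 4⁻¹ := by gcongr; exact min_le_right _ _
      _ < 1 := by rw [← div_eq_mul_inv, ENNReal.div_lt_iff (by norm_num) (by norm_num)]; norm_num
  filter_upwards [hse.eventually_exists_measure_ne_le ha_one ha_mul ha_pres (fun n => hf (u n))
    (fun g => (hinv g).comp hu) (lt_min hε (by norm_num)) hε3] with n ⟨c, hc⟩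
  exact iInf_le_of_le c (hc.trans (min_le_left _ _))

end StrongErgodicity

lemma tendsto_measure_compl_of_tendsto_measure_one {X ι : Type*} [MeasurableSpace X]
    {μ : Measure X} [IsProbabilityMeasure μ] {l : Filter ι} {s : ι → Set X}
    (hs : ∀ i, MeasurableSet (s i)) (h : Tendsto (fun i => μ (s i)) l (𝓝 1)) :
    Tendsto (fun i => μ (s i)ᶜ) l (𝓝 0) := by
  simp_rw [prob_compl_eq_one_sub (hs _)]
  simpa using ENNReal.Tendsto.sub tendsto_const_nhds h (Or.inl ENNReal.one_ne_top)

lemma exists_eventually_eq_of_eventually_succ_eq {α : Type*} {u : ℕ → α}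
    (h : ∀ᶠ k in atTop, u (k + 1) = u k) : ∃ v, ∀ᶠ k in atTop, u k = v := by
  obtain ⟨N, hN⟩ := eventually_atTop.1 h
  refine ⟨u N, eventually_atTop.2 ⟨N, fun k hk => ?_⟩⟩
  induction k, hk using Nat.le_induction with
  | base => rfl
  | succ k hk ih => rw [hN k hk, ih]

theorem exists_measurable_ae_eventually_eq {X H : Type*} [MeasurableSpace X] {μ : Measure X}
    [TopologicalSpace H] [TopologicalSpace.MetrizableSpace H] [MeasurableSpace H] [BorelSpace H]
    {f : ℕ → X → H} (hf : ∀ n, Measurable (f n))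
    (h : ∀ᵐ x ∂μ, ∃ v, ∀ᶠ k in atTop, f k x = v) :
    ∃ ψ : X → H, Measurable ψ ∧ ∀ᵐ x ∂μ, ∀ᶠ k in atTop, f k x = ψ x := by
  have hconst : ∀ {x v}, (∀ᶠ k in atTop, f k x = v) → Tendsto (fun k => f k x) atTop (𝓝 v) :=
    fun hv => tendsto_const_nhds.congr' (hv.mono fun _ hk => hk.symm)
  obtain ⟨ψ, hψ_meas, hψ⟩ := measurable_limit_of_tendsto_metrizable_ae
    (fun n => (hf n).aemeasurable) (h.mono fun x ⟨v, hv⟩ => ⟨v, hconst hv⟩)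
  refine ⟨ψ, hψ_meas, ?_⟩
  filter_upwards [h, hψ] with x ⟨v, hv⟩ hx
  rwa [← tendsto_nhds_unique (hconst hv) hx]

section Cohomology

variable {X H : Type*} [MeasurableSpace X] {μ : Measure X} [Group H]

lemma ae_frequently_of_tendsto_measure_setOf_not {p : ℕ → X → Prop}
    (h : Tendsto (fun k => μ {x | ¬p k x}) atTop (𝓝 0)) : ∀ᵐ x ∂μ, ∃ᶠ k in atTop, p k x := by
  have hnull : ∀ N, μ (⋂ k ≥ N, {x | ¬p k x}) = 0 := fun N =>
    le_antisymm (ge_of_tendsto h (eventually_atTop.2 ⟨N, fun k hk =>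
      measure_mono (biInter_subset_of_mem hk)⟩)) zero_le
  refine measure_mono_null (fun x hx => ?_) (measure_iUnion_null hnull)
  simpa [Filter.not_frequently, eventually_atTop] using hx

lemma tendsto_measure_inv_mul_comp_ne {φ : ℕ → X → H} (T : X → X) (u : X → H)
    (h : Tendsto (fun n => μ {x | u x ≠ φ n (T x) * (φ n x)⁻¹}) atTop (𝓝 0)) :
    Tendsto (fun p : ℕ × ℕ => μ {x | (φ p.1 (T x))⁻¹ * φ p.2 (T x) ≠ (φ p.1 x)⁻¹ * φ p.2 x})
      (atTop ×ˢ atTop) (𝓝 0) := by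
  have hsum := (h.comp tendsto_fst).add (h.comp tendsto_snd)
  rw [add_zero] at hsum
  refine tendsto_of_tendsto_of_tendsto_of_le_of_le tendsto_const_nhds hsum (fun _ => zero_le)
    fun p => (measure_mono fun x hx => ?_).trans (measure_union_le _ _)
  simp only [mem_union, mem_ofPred_eq]
  by_contra! ⟨h₁, h₂⟩
  rw [eq_mul_inv_iff_mul_eq] at h₁ h₂
  exact hx (by rw [← h₁, ← h₂]; group)

/-- Borel–Cantelli along a subsequence on which `φ_{n_k}⁻¹ φ_{n_{k+1}}` is `2⁻ᵏ`-close to a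
constant `c_k`; the right translations `b_k = (c₀ ⋯ c_{k-1})⁻¹` absorb these constants. -/
theorem exists_strictMono_ae_eventually_mul_eq_const {φ : ℕ → X → H}
    (h : Tendsto (fun p : ℕ × ℕ => ⨅ c, μ {x | (φ p.1 x)⁻¹ * φ p.2 x ≠ c})
      (atTop ×ˢ atTop) (𝓝 0)) :
    ∃ (n : ℕ → ℕ) (b : ℕ → H), StrictMono n ∧
      ∀ᵐ x ∂μ, ∃ v, ∀ᶠ k in atTop, φ (n k) x * b k = v := by
  have hN : ∀ k : ℕ, ∃ N, ∀ n m, N ≤ n → N ≤ m →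
      ∃ c, μ {x | (φ n x)⁻¹ * φ m x ≠ c} < 2⁻¹ ^ k := fun k => by
    rw [prod_atTop_atTop_eq] at h
    have hk : (0 : ℝ≥0∞) < 2⁻¹ ^ k := ENNReal.pow_pos (by norm_num) k
    obtain ⟨N, hN⟩ := eventually_atTop_prod_self.1 (h.eventually_lt_const hk)
    exact ⟨N, fun n m hn hm => iInf_lt_iff.1 (hN n m hn hm)⟩
  choose N hN using hN
  obtain ⟨n, hn_mono, hNn⟩ := extraction_forall_of_eventually fun k => eventually_ge_atTop (N k)
  choose c hc using fun k =>
    hN k (n k) (n (k + 1)) (hNn k) ((hNn k).trans (hn_mono.le_iff_le.2 k.le_succ))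
  let b : ℕ → H := fun k => Nat.rec 1 (fun k bk => (c k)⁻¹ * bk) k
  refine ⟨n, b, hn_mono, ?_⟩
  have hsummable : ∑' k, μ {x | (φ (n k) x)⁻¹ * φ (n (k + 1)) x ≠ c k} ≠ ∞ :=
    ne_top_of_le_ne_top (by simp [ENNReal.tsum_geometric])
      (ENNReal.tsum_le_tsum fun k => (hc k).le)
  filter_upwards [ae_eventually_notMem hsummable] with x hx
  refine exists_eventually_eq_of_eventually_succ_eq (hx.mono fun k hk => ?_)
  rw [not_not, inv_mul_eq_iff_eq_mul] at hk
  change φ (n (k + 1)) x * ((c k)⁻¹ * b k) = φ (n k) x * b k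
  rw [hk]
  group

end Cohomology

theorem approx_trivial_cocycle_is_trivial_general
    {Γ X H : Type*} [Group Γ]
    [MeasurableSpace X]
    (μ : Measure X) [IsProbabilityMeasure μ]
    (a : Γ → X → X) (ha_one : ∀ x, a 1 x = x)
    (ha_mul : ∀ g h x, a (g * h) x = a g (a h x))
    (ha_pres : ∀ g, MeasurePreserving (a g) μ μ)
    (hse : StronglyErgodic μ a)
    [Group H] [TopologicalSpace H] [IsTopologicalGroup H] [PolishSpace H]
    [MeasurableSpace H] [BorelSpace H]
    (w : Γ → X → H) (hw_meas : ∀ g, Measurable (w g))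
    (φ : ℕ → X → H) (hφ_meas : ∀ n, Measurable (φ n))
    (hφ : ∀ g : Γ,
      Tendsto (fun n => μ {x | w g x = φ n (a g x) * (φ n x)⁻¹}) atTop (𝓝 1)) :
    ∃ ψ : X → H, Measurable ψ ∧ ∀ g : Γ, ∀ᵐ x ∂μ, w g x = ψ (a g x) * (ψ x)⁻¹ := by
  have hbad : ∀ g, Tendsto (fun n => μ {x | w g x ≠ φ n (a g x) * (φ n x)⁻¹}) atTop (𝓝 0) :=
    fun g => tendsto_measure_compl_of_tendsto_measure_one (fun n => measurableSet_eq_fun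
      (hw_meas g) (((hφ_meas n).comp (ha_pres g).measurable).mul (hφ_meas n).inv)) (hφ g)
  have hdefect := hse.tendsto_iInf_measure_ne ha_one ha_mul ha_pres (l := atTop ×ˢ atTop)
    (fun p => (hφ_meas p.1).inv.mul (hφ_meas p.2))
    fun g => tendsto_measure_inv_mul_comp_ne (a g) (w g) (hbad g)
  obtain ⟨n, b, hn, hconst⟩ := exists_strictMono_ae_eventually_mul_eq_const hdefect
  obtain ⟨ψ, hψ_meas, hψ⟩ :=
    exists_measurable_ae_eventually_eq (fun k => (hφ_meas (n k)).mul_const (b k)) hconst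
  refine ⟨ψ, hψ_meas, fun g => ?_⟩
  have hfreq := ae_frequently_of_tendsto_measure_setOf_not ((hbad g).comp hn.tendsto_atTop)
  filter_upwards [hψ, (ha_pres g).quasiMeasurePreserving.ae hψ, hfreq] with x hx hgx hx_freq
  obtain ⟨k, hk, hkx, hkgx⟩ := (hx_freq.and_eventually (hx.and hgx)).exists
  rw [hk, ← hkx, ← hkgx]
  group

/-- **Lemma I of [Ioana]**: let `Γ ↷ (X, μ)` be a strongly ergodic p.m.p. action of a
countable group on a standard probability space, `H` a Polish group and `w : Γ × X → H` a
cocycle. If there are Borel maps `φₙ : X → H` with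
`μ({x | w(g, x) = φₙ(gx)·φₙ(x)⁻¹}) → 1` for every `g ∈ Γ`, then `w` is cohomologous to the
trivial homomorphism: there is a Borel map `ψ : X → H` with `w(g, x) = ψ(gx)·ψ(x)⁻¹` for all
`g ∈ Γ` and a.e. `x ∈ X`. -/
theorem approx_trivial_cocycle_is_trivial
    {Γ X H : Type*} [Group Γ] [Countable Γ]
    [MeasurableSpace X] [StandardBorelSpace X]
    (μ : Measure X) [IsProbabilityMeasure μ]
    (a : Γ → X → X) (ha_one : ∀ x, a 1 x = x)
    (ha_mul : ∀ g h x, a (g * h) x = a g (a h x))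
    (ha_meas : ∀ g, Measurable (a g))
    (ha_pres : ∀ g, MeasurePreserving (a g) μ μ)
    (hse : StronglyErgodic μ a)
    [Group H] [TopologicalSpace H] [IsTopologicalGroup H] [PolishSpace H]
    [MeasurableSpace H] [BorelSpace H]
    (w : Γ → X → H) (hw_meas : ∀ g, Measurable (w g))
    (hw_cocycle : ∀ g h : Γ, ∀ᵐ x ∂μ, w (g * h) x = w g (a h x) * w h x)
    (φ : ℕ → X → H) (hφ_meas : ∀ n, Measurable (φ n))
    (hφ : ∀ g : Γ,
      Tendsto (fun n => μ {x | w g x = φ n (a g x) * (φ n x)⁻¹}) atTop (𝓝 1)) :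
    ∃ ψ : X → H, Measurable ψ ∧ ∀ g : Γ, ∀ᵐ x ∂μ, w g x = ψ (a g x) * (ψ x)⁻¹ :=
  approx_trivial_cocycle_is_trivial_general μ a ha_one ha_mul ha_pres hse w hw_meas φ hφ_meas hφ

end IoanaPaper
end

section
/- Let Γ ↷ (X, μ) be a strongly ergodic p.m.p. action of a countable group on a standard probability space, let H be a compact Polish group, and let w : Γ × X → H be a cocycle. Assume there exists a sequence of Borel maps φ_n : X → H such that for every g ∈ Γ and almost every x ∈ X, φ_n(gx)·φ_n(x)⁻¹ → w(g, x) as n → ∞. Then w is cohomologous to the trivial homomorphism from Γ to H: there exists a Borel map ψ : X → H such that w(g, x) = ψ(gx)·ψ(x)⁻¹ for all g ∈ Γ and almost every x ∈ X. -/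
open MeasureTheory Filter Topology Set

namespace IoanaPaper

open scoped ENNReal Finset

/-!
Following Schmidt, one shows that the maps `θₘₙ = φₙ⁻¹ φₘ` are Cauchy modulo constants in
measure. Writing `uₙ(x) = φₙ(gx) φₙ(x)⁻¹ → w(g, x)`, one has `θₘₙ(gx) = φₙ(x)⁻¹ (uₙ⁻¹ uₘ)(x) φₘ(x)`,
and two-sided multiplication is uniformly continuous on the compact group `H`, so `θₘₙ` is almost
invariant for `m, n` large. Cover `H` by finitely many `ε/4`-balls, take one of large measure under
`θₘₙ` with center `c`, and a radius `ρ ∈ (ε/4, ε)` at which few points `x` have `d(θₘₙ x, c)`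
near `ρ`: then `{x | d(θₘₙ x, c) < ρ}` is an almost invariant set of non-small measure, so by
strong ergodicity its complement is small, i.e. `θₘₙ` is concentrated near `c`. Correcting `φₙ`
along a fast subsequence by these constants, Borel–Cantelli gives a.e. convergence to some `ψ`,
and `ψ(gx) ψ(x)⁻¹ = lim φₙ(gx) φₙ(x)⁻¹ = w(g, x)` because constants on the right cancel.
-/

section Metric

variable {H : Type*} [PseudoMetricSpace H] [Group H] [IsTopologicalGroup H] [CompactSpace H]

theorem exists_pos_forall_dist_mul_mul_lt {ε : ℝ} (hε : 0 < ε) :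
    ∃ δ > 0, ∀ a b p q : H, dist p q < δ → dist (a * p * b) (a * q * b) < ε := by
  have h := Metric.uniformContinuous_iff.1 <| CompactSpace.uniformContinuous_of_continuous
    (by fun_prop : Continuous fun t : H × H × H => t.1 * t.2.1 * t.2.2)
  obtain ⟨δ, hδ, hδε⟩ := h ε hε
  refine ⟨δ, hδ, fun a b p q hpq => hδε (a := (a, p, b)) (b := (a, q, b)) ?_⟩
  simpa [Prod.dist_eq] using hpq

theorem exists_pos_forall_dist_mul_inv_mul_mul_lt {ε : ℝ} (hε : 0 < ε) :
    ∃ δ > 0, ∀ p q r s w : H, dist q w < δ → dist r w < δ →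
      dist (p * (q⁻¹ * r) * s) (p * s) < ε := by
  obtain ⟨δ₁, hδ₁, h₁⟩ := exists_pos_forall_dist_mul_mul_lt (H := H) hε
  obtain ⟨δ₂, hδ₂, h₂⟩ := exists_pos_forall_dist_mul_mul_lt (H := H) hδ₁
  refine ⟨δ₂ / 2, half_pos hδ₂, fun p q r s w hq hr => ?_⟩
  have hrq : dist r q < δ₂ := by linarith [dist_triangle_right r q w]
  have hquot : dist (q⁻¹ * r) 1 < δ₁ := by simpa using h₂ q⁻¹ 1 r q hrq
  simpa using h₁ p s _ _ hquot

end Metric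

theorem cauchySeq_of_eventually_dist_le_of_summable {α : Type*} [PseudoMetricSpace α]
    {u : ℕ → α} {d : ℕ → ℝ} (hd : Summable d)
    (h : ∀ᶠ n in atTop, dist (u n) (u (n + 1)) ≤ d n) : CauchySeq u := by
  obtain ⟨K, hK⟩ := eventually_atTop.1 h
  refine (cauchySeq_shift K).1 <| cauchySeq_of_dist_le_of_summable (fun n => d (n + K))
    (fun n => ?_) ((summable_nat_add_iff K).2 hd)
  simpa only [add_right_comm n K 1] using hK (n + K) (Nat.le_add_left K n)

section Pigeonhole

variable {X : Type*} [MeasurableSpace X] (μ : Measure X)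

theorem exists_mem_measure_univ_div_card_le {ι : Type*} (s : Finset ι) (U : ι → Set X)
    (hs : s.Nonempty) (hU : univ ⊆ ⋃ i ∈ s, U i) : ∃ i ∈ s, μ univ / #s ≤ μ (U i) := by
  refine ENNReal.exists_le_of_sum_le hs ?_
  calc ∑ _i ∈ s, μ univ / #s = μ univ := by
        rw [Finset.sum_const, nsmul_eq_mul,
          ENNReal.mul_div_cancel (by simpa using hs.ne_empty) (ENNReal.natCast_ne_top _)]
    _ ≤ ∑ i ∈ s, μ (U i) := (measure_mono hU).trans (measure_biUnion_finset_le s U)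

theorem exists_mem_Ioo_measure_preimage_ball_le {u : X → ℝ} (hu : Measurable u) {a b : ℝ}
    (hab : a < b) {N : ℕ} (hN : N ≠ 0) :
    ∃ ρ ∈ Ioo a b, μ (u ⁻¹' Metric.ball ρ ((b - a) / (2 * N))) ≤ μ univ / N := by
  set r := (b - a) / (2 * N)
  have hNpos : (0 : ℝ) < N := by positivity
  have hr : 0 < r := by positivity
  have hrN : 2 * N * r = b - a := by simp only [r]; field_simp
  let center : ℕ → ℝ := fun i => a + (2 * i + 1) * r
  have hdisj : (Finset.range N : Set ℕ).PairwiseDisjoint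
      fun i => u ⁻¹' Metric.ball (center i) r := by
    intro i _ j _ hij
    refine (Metric.ball_disjoint_ball ?_).preimage u
    have h1 : (1 : ℝ) ≤ |(i : ℝ) - j| := by
      rcases Nat.lt_or_gt_of_ne hij with h | h
      · have : (i : ℝ) + 1 ≤ j := by exact_mod_cast h
        exact le_abs.2 (Or.inr (by linarith))
      · have : (j : ℝ) + 1 ≤ i := by exact_mod_cast h
        exact le_abs.2 (Or.inl (by linarith))
    rw [Real.dist_eq, show center i - center j = 2 * r * (i - j) by ring, abs_mul,
      abs_of_pos (by positivity)]
    nlinarith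
  obtain ⟨i, hi, hle⟩ := ENNReal.exists_le_of_sum_le (s := Finset.range N)
    (f := fun i => μ (u ⁻¹' Metric.ball (center i) r)) (g := fun _ => μ univ / N)
    (Finset.nonempty_range_iff.2 hN) <| by
      rw [← measure_biUnion_finset hdisj fun i _ => hu measurableSet_ball, Finset.sum_const,
        Finset.card_range, nsmul_eq_mul,
        ENNReal.mul_div_cancel (by exact_mod_cast hN) (ENNReal.natCast_ne_top _)]
      exact measure_mono (subset_univ _)
  have hiN : (i : ℝ) + 1 ≤ N := by exact_mod_cast Finset.mem_range.1 hi
  have hcenter : 0 < (2 * i + 1) * r := by positivity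
  exact ⟨center i, ⟨by linarith, by nlinarith⟩, hle⟩

end Pigeonhole

theorem symmDiff_setOf_lt_subset {X : Type*} (u v : X → ℝ) (ρ r : ℝ) :
    symmDiff {x | v x < ρ} {x | u x < ρ} ⊆ {x | r ≤ |v x - u x|} ∪ u ⁻¹' Metric.ball ρ r := by
  intro x hx
  rw [mem_union, or_iff_not_imp_left]
  intro hvu
  simp only [mem_symmDiff, mem_ofPred_eq, not_lt, not_le] at hx hvu
  rw [mem_preimage, Metric.mem_ball, Real.dist_eq]
  rw [abs_lt] at hvu ⊢
  constructor <;> rcases hx with ⟨hv, hu⟩ | ⟨hu, hv⟩ <;> linarith [hvu.1, hvu.2]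

namespace StronglyErgodic

variable {Γ X : Type*} [MeasurableSpace X] {μ : Measure X} {a : Γ → X → X}

theorem exists_finset_forall_measure_symmDiff_lt [Countable Γ] [Nonempty Γ]
    (hse : StronglyErgodic μ a) {β : ℝ≥0∞} (hβ : 0 < β) :
    ∃ F : Finset Γ, ∃ δ > 0, ∀ A, MeasurableSet A →
      (∀ g ∈ F, μ (symmDiff (a g '' A) A) < δ) → μ A * μ Aᶜ < β := by
  classical
  obtain ⟨e, he⟩ := exists_surjective_nat Γ
  by_contra! hbad
  choose A hA hsmall hlarge using fun n : ℕ =>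
    hbad ((Finset.range (n + 1)).image e) (n : ℝ≥0∞)⁻¹
      (ENNReal.inv_pos.2 (ENNReal.natCast_ne_top n))
  have hinv : ∀ g, Tendsto (fun n => μ (symmDiff (a g '' A n) (A n))) atTop (𝓝 0) := by
    intro g
    obtain ⟨i, rfl⟩ := he g
    refine tendsto_of_tendsto_of_tendsto_of_le_of_le' tendsto_const_nhds
      ENNReal.tendsto_inv_nat_nhds_zero (Eventually.of_forall fun _ => zero_le) ?_
    filter_upwards [eventually_ge_atTop i] with n hn
    exact (hsmall n _ (Finset.mem_image_of_mem e (Finset.mem_range.2 (Nat.lt_succ_of_le hn)))).le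
  exact hβ.not_ge (ge_of_tendsto' (hse A hA hinv) hlarge)

theorem exists_finset_forall_measure_preimage_symmDiff_lt [Group Γ] [Countable Γ]
    (hse : StronglyErgodic μ a) (ha_one : ∀ x, a 1 x = x)
    (ha_mul : ∀ g h x, a (g * h) x = a g (a h x)) {β : ℝ≥0∞} (hβ : 0 < β) :
    ∃ F : Finset Γ, ∃ δ > 0, ∀ A, MeasurableSet A →
      (∀ g ∈ F, μ (symmDiff (a g ⁻¹' A) A) < δ) → μ A * μ Aᶜ < β := by
  classical
  obtain ⟨F, δ, hδ, hF⟩ := hse.exists_finset_forall_measure_symmDiff_lt hβ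
  refine ⟨F.image (·⁻¹), δ, hδ, fun A hA hsmall => hF A hA fun g hg => ?_⟩
  have hcancel : ∀ g : Γ, Function.LeftInverse (a g⁻¹) (a g) := fun g x => by
    rw [← ha_mul, inv_mul_cancel, ha_one]
  rw [image_eq_preimage_of_inverse (hcancel g) fun x => by simpa using hcancel g⁻¹ x]
  exact hsmall _ (Finset.mem_image_of_mem _ hg)

theorem exists_forall_exists_measure_le_dist_lt {Y : Type*} [PseudoMetricSpace Y]
    [CompactSpace Y] [Nonempty Y] [MeasurableSpace Y] [OpensMeasurableSpace Y]
    [Group Γ] [Countable Γ]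
    [IsProbabilityMeasure μ] (hse : StronglyErgodic μ a) (ha_one : ∀ x, a 1 x = x)
    (ha_mul : ∀ g h x, a (g * h) x = a g (a h x)) {ε : ℝ} (hε : 0 < ε) :
    ∃ F : Finset Γ, ∃ η > 0, ∃ δ > 0, ∀ f : X → Y, Measurable f →
      (∀ g ∈ F, μ {x | η ≤ dist (f (a g x)) (f x)} < δ) →
      ∃ c, μ {x | ε ≤ dist (f x) c} < ENNReal.ofReal ε := by
  obtain ⟨s, hs⟩ := isCompact_univ.elim_finite_subcover (fun c : Y => Metric.ball c (ε / 4))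
    (fun _ => Metric.isOpen_ball) fun y _ =>
      mem_iUnion.2 ⟨y, Metric.mem_ball_self (by positivity)⟩
  have hs_ne : s.Nonempty := by
    obtain ⟨c, hc, -⟩ := mem_iUnion₂.1 (hs (mem_univ (Classical.arbitrary Y)))
    exact ⟨c, hc⟩
  obtain ⟨F, δ, hδ, hF⟩ := hse.exists_finset_forall_measure_preimage_symmDiff_lt ha_one ha_mul
    (β := (#s : ℝ≥0∞)⁻¹ * ENNReal.ofReal ε)
    (ENNReal.mul_pos (ENNReal.inv_ne_zero.2 (ENNReal.natCast_ne_top _)) (by positivity))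
  obtain ⟨N, hN⟩ := ENNReal.exists_inv_nat_lt (ENNReal.half_pos hδ.ne').ne'
  have hN0 : N ≠ 0 := by rintro rfl; simp at hN
  set r := (ε - ε / 4) / (2 * N)
  refine ⟨F, r, div_pos (by linarith) (by positivity), δ / 2, ENNReal.half_pos hδ.ne',
    fun f hf hsmall => ?_⟩
  obtain ⟨c, -, hc⟩ := exists_mem_measure_univ_div_card_le μ s
    (fun c => f ⁻¹' Metric.ball c (ε / 4)) hs_ne fun x _ => by
      simpa using hs (mem_univ (f x))
  rw [measure_univ, one_div] at hc
  set u := fun x => dist (f x) c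
  have hu : Measurable u := (continuous_id.dist continuous_const).measurable.comp hf
  obtain ⟨ρ, hρ, hρμ⟩ :=
    exists_mem_Ioo_measure_preimage_ball_le μ hu (by linarith : ε / 4 < ε) hN0
  set A := {x | u x < ρ}
  have hAinv : ∀ g ∈ F, μ (symmDiff (a g ⁻¹' A) A) < δ := by
    intro g hg
    calc μ (symmDiff (a g ⁻¹' A) A)
        ≤ μ ({x | r ≤ dist (f (a g x)) (f x)} ∪ u ⁻¹' Metric.ball ρ r) :=
          measure_mono <| (symmDiff_setOf_lt_subset u (u ∘ a g) ρ _).trans <|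
            union_subset_union_left _ fun x hx => le_trans hx (abs_dist_sub_le _ _ _)
      _ ≤ _ := measure_union_le _ _
      _ < δ / 2 + δ / 2 := ENNReal.add_lt_add (hsmall g hg) (hρμ.trans_lt (by simpa using hN))
      _ = δ := ENNReal.add_halves δ
  have hA_large : (#s : ℝ≥0∞)⁻¹ ≤ μ A :=
    hc.trans (measure_mono fun x (hx : u x < ε / 4) => hx.trans hρ.1)
  have hAc_small : μ Aᶜ < ENNReal.ofReal ε := by
    by_contra! h
    exact (hF A (measurableSet_lt hu measurable_const) hAinv).not_ge (mul_le_mul' hA_large h)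
  exact ⟨c, (measure_mono fun x (hx : ε ≤ u x) => not_lt.2 (hρ.2.le.trans hx)).trans_lt hAc_small⟩

end StronglyErgodic

section Coboundary

variable {X : Type*} [MeasurableSpace X] {μ : Measure X}
  {H : Type*} [PseudoMetricSpace H] [Group H] [IsTopologicalGroup H] [CompactSpace H]

theorem eventually_measure_le_dist_inv_mul_lt [MeasurableSpace H] [BorelSpace H]
    [IsFiniteMeasure μ] {φ φ' : ℕ → X → H} (hφ : ∀ n, Measurable (φ n))
    (hφ' : ∀ n, Measurable (φ' n)) {v : X → H}
    (hv : ∀ᵐ x ∂μ, Tendsto (fun n => φ' n x * (φ n x)⁻¹) atTop (𝓝 (v x)))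
    {η : ℝ} (hη : 0 < η) {δ : ℝ≥0∞} (hδ : 0 < δ) :
    ∀ᶠ p in atTop ×ˢ atTop,
      μ {x | η ≤ dist ((φ' p.2 x)⁻¹ * φ' p.1 x) ((φ p.2 x)⁻¹ * φ p.1 x)} < δ := by
  obtain ⟨ζ, hζ, hζη⟩ := exists_pos_forall_dist_mul_inv_mul_mul_lt (H := H) hη
  have hsmall : ∀ᶠ n in atTop, μ {x | ζ ≤ dist (φ' n x * (φ n x)⁻¹) (v x)} < δ / 2 :=
    (tendstoInMeasure_iff_dist.1 (tendstoInMeasure_of_tendsto_ae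
      (fun n => ((hφ' n).mul (hφ n).inv).aestronglyMeasurable) hv) ζ hζ).eventually_lt_const
      (ENNReal.half_pos hδ.ne')
  filter_upwards [hsmall.prod_mk hsmall] with ⟨m, n⟩ ⟨hm, hn⟩
  calc μ {x | η ≤ dist ((φ' n x)⁻¹ * φ' m x) ((φ n x)⁻¹ * φ m x)}
      ≤ μ ({x | ζ ≤ dist (φ' n x * (φ n x)⁻¹) (v x)} ∪
          {x | ζ ≤ dist (φ' m x * (φ m x)⁻¹) (v x)}) := by
        refine measure_mono fun x hx => ?_
        by_contra! hclose
        simp only [mem_union, mem_ofPred_eq, not_or, not_le] at hclose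
        have h := hζη (φ n x)⁻¹ _ _ (φ m x) (v x) hclose.1 hclose.2
        rw [show (φ n x)⁻¹ * ((φ' n x * (φ n x)⁻¹)⁻¹ * (φ' m x * (φ m x)⁻¹)) * φ m x =
          (φ' n x)⁻¹ * φ' m x by group] at h
        exact (not_le.2 h) hx
    _ ≤ _ := measure_union_le _ _
    _ < δ / 2 + δ / 2 := ENNReal.add_lt_add hn hm
    _ = δ := ENNReal.add_halves δ

theorem exists_strictMono_ae_exists_tendsto_mul_const {φ : ℕ → X → H}
    (hφ : ∀ ε > 0, ∀ᶠ p in atTop ×ˢ atTop,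
      ∃ c, μ {x | ε ≤ dist ((φ p.2 x)⁻¹ * φ p.1 x) c} < ENNReal.ofReal ε) :
    ∃ ν : ℕ → ℕ, StrictMono ν ∧ ∃ e : ℕ → H,
      ∀ᵐ x ∂μ, ∃ l, Tendsto (fun k => φ (ν k) x * e k) atTop (𝓝 l) := by
  have hscale : ∀ k : ℕ, ∃ δ > 0, δ ≤ (1 / 2 : ℝ) ^ k ∧
      ∀ a b p q : H, dist p q < δ → dist (a * p * b) (a * q * b) < (1 / 2) ^ k := by
    intro k
    obtain ⟨δ, hδ, h⟩ :=
      exists_pos_forall_dist_mul_mul_lt (H := H) (by positivity : (0 : ℝ) < (1 / 2) ^ k)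
    exact ⟨min δ ((1 / 2) ^ k), lt_min hδ (by positivity), min_le_right _ _,
      fun a b p q hpq => h a b p q (hpq.trans_le (min_le_left _ _))⟩
  choose δ hδ_pos hδ_le hδ using hscale
  choose N hN using fun k => eventually_atTop_prod_self.1 <| by
    rw [← prod_atTop_atTop_eq (α := ℕ) (β := ℕ)]; exact hφ (δ k) (hδ_pos k)
  obtain ⟨ν, hν, hNν⟩ := extraction_forall_of_eventually fun k => eventually_ge_atTop (N k)
  choose c hc using fun k =>
    hN k (ν (k + 1)) (ν k) ((hNν k).trans (hν.monotone k.le_succ)) (hNν k)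
  -- `e` absorbs the constants `c`, so that off the exceptional sets consecutive corrected maps
  -- `φ (ν k) * e k` are `2⁻ᵏ`-close.
  let e : ℕ → H := fun k => Nat.rec 1 (fun j ej => (c j)⁻¹ * ej) k
  have he_succ : ∀ k, e (k + 1) = (c k)⁻¹ * e k := fun _ => rfl
  refine ⟨ν, hν, e, ?_⟩
  have hsum : ∑' k, μ {x | δ k ≤ dist ((φ (ν k) x)⁻¹ * φ (ν (k + 1)) x) (c k)} ≠ ∞ := by
    refine ne_top_of_le_ne_top (ENNReal.ofReal_ne_top (r := ∑' k : ℕ, (1 / 2 : ℝ) ^ k)) ?_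
    rw [ENNReal.ofReal_tsum_of_nonneg (fun k => by positivity) summable_geometric_two]
    exact ENNReal.tsum_le_tsum fun k => (hc k).le.trans (ENNReal.ofReal_le_ofReal (hδ_le k))
  filter_upwards [ae_eventually_notMem hsum] with x hx
  refine cauchySeq_tendsto_of_complete <|
    cauchySeq_of_eventually_dist_le_of_summable summable_geometric_two ?_
  filter_upwards [hx] with k hk
  have h := hδ k (φ (ν k) x) (e (k + 1)) _ _ (not_le.1 hk)
  have hnext : φ (ν k) x * ((φ (ν k) x)⁻¹ * φ (ν (k + 1)) x) * e (k + 1) =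
      φ (ν (k + 1)) x * e (k + 1) := by group
  have hcur : φ (ν k) x * c k * e (k + 1) = φ (ν k) x * e k := by rw [he_succ]; group
  rw [hnext, hcur] at h
  exact (dist_comm _ _).trans_le h.le

end Coboundary

theorem pointwise_approx_trivial_cocycle_is_trivial_general
    {Γ X H : Type*} [Group Γ] [Countable Γ]
    [MeasurableSpace X]
    (μ : Measure X) [IsProbabilityMeasure μ]
    (a : Γ → X → X) (ha_one : ∀ x, a 1 x = x)
    (ha_mul : ∀ g h x, a (g * h) x = a g (a h x))
    (ha_pres : ∀ g, MeasurePreserving (a g) μ μ)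
    (hse : StronglyErgodic μ a)
    [Group H] [TopologicalSpace H] [IsTopologicalGroup H] [PolishSpace H] [CompactSpace H]
    [MeasurableSpace H] [BorelSpace H]
    (w : Γ → X → H)
    (φ : ℕ → X → H) (hφ_meas : ∀ n, Measurable (φ n))
    (hφ : ∀ g : Γ, ∀ᵐ x ∂μ,
      Tendsto (fun n => φ n (a g x) * (φ n x)⁻¹) atTop (𝓝 (w g x))) :
    ∃ ψ : X → H, Measurable ψ ∧ ∀ g : Γ, ∀ᵐ x ∂μ, w g x = ψ (a g x) * (ψ x)⁻¹ := by
  let := TopologicalSpace.upgradeIsCompletelyMetrizable H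
  have hcauchy : ∀ ε > 0, ∀ᶠ p in atTop ×ˢ atTop,
      ∃ c, μ {x | ε ≤ dist ((φ p.2 x)⁻¹ * φ p.1 x) c} < ENNReal.ofReal ε := by
    intro ε hε
    obtain ⟨F, η, hη, δ, hδ, hF⟩ :=
      hse.exists_forall_exists_measure_le_dist_lt (Y := H) ha_one ha_mul hε
    have hsmall := (eventually_all_finset F).2 fun g _ =>
      eventually_measure_le_dist_inv_mul_lt hφ_meas
        (fun n => (hφ_meas n).comp (ha_pres g).measurable) (hφ g) hη hδ
    filter_upwards [hsmall] with p hp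
    exact hF _ ((hφ_meas p.2).inv.mul (hφ_meas p.1)) hp
  obtain ⟨ν, hν, e, he⟩ := exists_strictMono_ae_exists_tendsto_mul_const hcauchy
  obtain ⟨ψ, hψ_meas, hψ⟩ := measurable_limit_of_tendsto_metrizable_ae
    (fun k => ((hφ_meas (ν k)).mul_const (e k)).aemeasurable) he
  refine ⟨ψ, hψ_meas, fun g => ?_⟩
  filter_upwards [hφ g, hψ, (ha_pres g).quasiMeasurePreserving.ae hψ] with x hwx hψx hψgx
  refine tendsto_nhds_unique (hwx.comp hν.tendsto_atTop) ?_
  simpa [mul_assoc, Function.comp_def] using hψgx.mul hψx.inv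

/-- **Lemma J of [Ioana] (after Schmidt)**: let `Γ ↷ (X, μ)` be a strongly ergodic p.m.p.
action of a countable group on a standard probability space, `H` a compact Polish group and
`w : Γ × X → H` a cocycle. If there are Borel maps `φₙ : X → H` with
`φₙ(gx)·φₙ(x)⁻¹ → w(g, x)` for every `g ∈ Γ` and a.e. `x ∈ X`, then `w` is cohomologous to
the trivial homomorphism: there is a Borel map `ψ : X → H` with `w(g, x) = ψ(gx)·ψ(x)⁻¹`
for all `g ∈ Γ` and a.e. `x ∈ X`. -/
theorem pointwise_approx_trivial_cocycle_is_trivial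
    {Γ X H : Type*} [Group Γ] [Countable Γ]
    [MeasurableSpace X] [StandardBorelSpace X]
    (μ : Measure X) [IsProbabilityMeasure μ]
    (a : Γ → X → X) (ha_one : ∀ x, a 1 x = x)
    (ha_mul : ∀ g h x, a (g * h) x = a g (a h x))
    (ha_meas : ∀ g, Measurable (a g))
    (ha_pres : ∀ g, MeasurePreserving (a g) μ μ)
    (hse : StronglyErgodic μ a)
    [Group H] [TopologicalSpace H] [IsTopologicalGroup H] [PolishSpace H] [CompactSpace H]
    [MeasurableSpace H] [BorelSpace H]
    (w : Γ → X → H) (hw_meas : ∀ g, Measurable (w g))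
    (hw_cocycle : ∀ g h : Γ, ∀ᵐ x ∂μ, w (g * h) x = w g (a h x) * w h x)
    (φ : ℕ → X → H) (hφ_meas : ∀ n, Measurable (φ n))
    (hφ : ∀ g : Γ, ∀ᵐ x ∂μ,
      Tendsto (fun n => φ n (a g x) * (φ n x)⁻¹) atTop (𝓝 (w g x))) :
    ∃ ψ : X → H, Measurable ψ ∧ ∀ g : Γ, ∀ᵐ x ∂μ, w g x = ψ (a g x) * (ψ x)⁻¹ :=
  pointwise_approx_trivial_cocycle_is_trivial_general μ a ha_one ha_mul ha_pres hse w φ hφ_meas hφ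

end IoanaPaper
end
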